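/- arXiv:2501.18933 — 2 statements merged into one kernel-verified Lean document; each statement's English description precedes it below -/
import Mathlib

section
/- Let M be the commutative monoid obtained as the quotient of ℕ³ by the additive congruence generated by the relation (1,0,1) ~ (2,1,0). Then for all natural numbers a ≥ 1 and c, the class of (a, a, c) in M equals the class of (a + c, a + c, 0). -/
/-- The Kirby relation on ℕ³: (1,0,1) ~ (2,1,0). -/
def kirbyRel : (ℕ × ℕ × ℕ) → (ℕ × ℕ × ℕ) → Prop :=
  fun x y => x = (1, 0, 1) ∧ y = (2, 1, 0)

/-- The additive congruence on ℕ³ generated by the Kirby relation. -/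
def kirbyCon : AddCon (ℕ × ℕ × ℕ) := addConGen kirbyRel

theorem stmt1 (a c : ℕ) (ha : 1 ≤ a) :
    AddCon.mk' kirbyCon (a, a, c) = AddCon.mk' kirbyCon (a + c, a + c, 0) := by
  induction c generalizing a with
  | zero => rfl
  | succ c ih =>
    have hbase : kirbyCon (1, 0, 1) (2, 1, 0) :=
      AddConGen.Rel.of _ _ ⟨rfl, rfl⟩
    have hstep : kirbyCon (a, a, c + 1) (a + 1, a + 1, c) := by
      have := kirbyCon.add hbase (kirbyCon.refl (a - 1, a, c))
      have h1 : (1, 0, 1) + (a - 1, a, c) = ((a : ℕ), a, c + 1) := by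
        have : 1 + (a - 1) = a := by omega
        simp [Prod.ext_iff, this, Nat.add_comm]
      have h2 : (2, 1, 0) + (a - 1, a, c) = ((a + 1 : ℕ), a + 1, c) := by
        have : 2 + (a - 1) = a + 1 := by omega
        simp [Prod.ext_iff, this, Nat.add_comm]
      rwa [h1, h2] at this
    have h1 : AddCon.mk' kirbyCon (a, a, c + 1) = AddCon.mk' kirbyCon (a + 1, a + 1, c) :=
      (AddCon.eq kirbyCon).mpr hstep
    have h2 := ih (a + 1) (by omega)
    rw [h1, h2]
    have : a + 1 + c = a + (c + 1) := by omega
    rw [this]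
end

section
/- Let G be a simple graph, let s, u, t be vertices, and let i, j be natural numbers such that G.dist s u = i, G.dist u t = j, s is reachable from u and u is reachable from t, and for every vertex w reachable from s, if G.dist s w ≤ i then G.dist w t ≥ j. Then G.dist s t = i + j. -/
open SimpleGraph

lemma aux_walk_to_getVert {V : Type*} {G : SimpleGraph V} {u v : V} (p : G.Walk u v) :
    ∀ n : ℕ, ∃ q : G.Walk u (p.getVert n), q.length ≤ n := by
  induction p with
  | nil =>
    intro n
    exact ⟨Walk.nil.copy rfl (by simp [Walk.getVert]), by simp⟩
  | cons h q ih =>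
    intro n
    cases n with
    | zero => exact ⟨Walk.nil.copy rfl (by simp), by simp⟩
    | succ n =>
      obtain ⟨r, hr⟩ := ih n
      exact ⟨(r.cons h).copy rfl (by simp), by simpa using Nat.succ_le_succ hr⟩

lemma aux_length_drop {V : Type*} {G : SimpleGraph V} {u v : V} (p : G.Walk u v) :
    ∀ n : ℕ, (p.drop n).length = p.length - n := by
  induction p with
  | nil => intro n; cases n <;> simp [Walk.drop]
  | cons h q ih =>
    intro n
    cases n with
    | zero => simp [Walk.drop]
    | succ n => simp [Walk.drop, ih n]

theorem stmt12 {V : Type*} (G : SimpleGraph V) (s u t : V) (i j : ℕ)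
    (hsu : G.dist s u = i) (hut : G.dist u t = j)
    (hreach₁ : G.Reachable s u) (hreach₂ : G.Reachable u t)
    (hmin : ∀ w, G.Reachable s w → G.dist s w ≤ i → G.dist w t ≥ j) :
    G.dist s t = i + j := by
  have hst : G.Reachable s t := hreach₁.trans hreach₂
  -- upper bound
  obtain ⟨p, hp⟩ := hreach₁.exists_walk_length_eq_dist
  obtain ⟨q, hq⟩ := hreach₂.exists_walk_length_eq_dist
  have hub : G.dist s t ≤ i + j := by
    have := G.dist_le (p.append q)
    rwa [Walk.length_append, hp, hq, hsu, hut] at this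
  -- lower bound
  obtain ⟨r, hr⟩ := hst.exists_walk_length_eq_dist
  by_cases hd : i ≤ r.length
  · set w := r.getVert i with hw
    obtain ⟨q', hq'⟩ := aux_walk_to_getVert r i
    have hrw : G.Reachable s w := ⟨q'⟩
    have hsw : G.dist s w ≤ i := le_trans (G.dist_le q') hq'
    have hwt : G.dist w t ≥ j := hmin w hrw hsw
    have hdrop : G.dist w t ≤ r.length - i := by
      have := G.dist_le (r.drop i)
      rwa [aux_length_drop r i] at this
    omega
  · -- r.length < i, so dist s t ≤ i, hence j ≤ dist t t = 0
    push_neg at hd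
    have h1 : G.dist s t ≤ i := by omega
    have h2 : j ≤ G.dist t t := hmin t hst h1
    rw [G.dist_self] at h2
    have hj : j = 0 := Nat.le_zero.mp h2
    have hut' : u = t := by
      rcases (SimpleGraph.dist_eq_zero_iff_eq_or_not_reachable (G := G)).mp (by rw [hut, hj]) with h | h
      · exact h
      · exact absurd hreach₂ h
    subst hut'
    omega
end
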